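/- Let w_0 ∈ S_n be the reversal permutation w_0(i) = n+1−i. Then the probability that ρ_n = w_0 equals 2^n · n!/(2n)!, and likewise the probability that γ_n = w_0 equals 2^n · n!/(2n)!. -/

import Mathlib

/-
The rank permutation is the reversal exactly when `Z 0 > Z 1 > ⋯ > Z (n-1)`, and it is an
involution, so both events coincide. By independence the vector `(Z i)` has the product law
of the densities `(i + 1) x ^ i` on `(0, 1]`. Integrating out the largest coordinate first,
one shows by induction on `k` that `k` independent variables with densities
`(s + i + 1) x ^ (s + i)` are strictly decreasing and below `t ≤ 1` with probability
`c k s * t ^ e k s`, where `e k s = ∑_{i<k} (s + i + 1)` and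
`c (k + 1) s = (s + 1) c k (s + 1) / e (k + 1) s`; this recursion is solved by
`c k s = 2^k (s+k)! (k+2s)! / (s! k! (2k+2s)!)`, and `c n 0 = 2^n n! / (2n)!`.
-/

open MeasureTheory ProbabilityTheory Filter
open scoped ENNReal NNReal Topology

/-- The hypotheses defining an inverse-unfair permutation `ρ` on a probability
space `(Ω, μ)`: `Z i` is (distributed as) the maximum of `i+1` i.i.d. uniform
random variables on `(0,1)` (players are indexed by `Fin n`, player `i : Fin n`
drawing `(i : ℕ) + 1` numbers), the `Z i` are independent, and almost surely
`ρ ω` is the rank permutation of `(Z 0 ω, …, Z (n-1) ω)`. -/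
structure IsInverseUnfair {n : ℕ} {Ω : Type*} [MeasurableSpace Ω]
    (μ : Measure Ω) (Z : Fin n → Ω → ℝ) (ρ : Ω → Equiv.Perm (Fin n)) : Prop where
  prob : IsProbabilityMeasure μ
  meas : ∀ i, Measurable (Z i)
  indep : iIndepFun Z μ
  cdf : ∀ i : Fin n, ∀ t ∈ Set.Icc (0 : ℝ) 1,
      μ {ω | Z i ω ≤ t} = ENNReal.ofReal (t ^ ((i : ℕ) + 1))
  rhoMeas : ∀ σ : Equiv.Perm (Fin n), MeasurableSet {ω | ρ ω = σ}
  rank : ∀ᵐ ω ∂μ, ∀ i j : Fin n, (ρ ω i < ρ ω j ↔ Z i ω < Z j ω)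

open Set
open scoped Nat

lemma Fin.strictAnti_cons {α : Type*} [Preorder α] {n : ℕ} {f : Fin n → α} {a : α} :
    StrictAnti (Fin.cons a f : Fin (n + 1) → α) ↔ (∀ j, f j < a) ∧ StrictAnti f :=
  Fin.liftFun_cons (· > ·)

lemma Fin.strictAnti_cons_and_forall_lt_iff {α : Type*} [Preorder α] {n : ℕ} {f : Fin n → α}
    {a t : α} :
    (StrictAnti (Fin.cons a f : Fin (n + 1) → α) ∧ ∀ i, (Fin.cons a f : Fin (n + 1) → α) i < t)
      ↔ a < t ∧ StrictAnti f ∧ ∀ j, f j < a := by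
  simp only [Fin.strictAnti_cons, Fin.forall_fin_succ, Fin.cons_zero, Fin.cons_succ]
  exact ⟨fun h => ⟨h.2.1, h.1.2, h.1.1⟩,
    fun h => ⟨⟨h.2.2, h.2.1⟩, h.1, fun j => (h.2.2 j).trans h.1⟩⟩

lemma MeasurableEquiv.piFinSuccAbove_zero_symm_apply {α : Type*} [MeasurableSpace α] {n : ℕ}
    (p : α × (Fin n → α)) :
    (MeasurableEquiv.piFinSuccAbove (fun _ : Fin (n + 1) => α) 0).symm p = Fin.cons p.1 p.2 := by
  simp only [MeasurableEquiv.piFinSuccAbove_symm_apply, Fin.insertNthEquiv_zero]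
  rfl

lemma Fin.eq_revPerm_of_strictAnti {n : ℕ} {σ : Equiv.Perm (Fin n)} (hσ : StrictAnti σ) :
    σ = Fin.revPerm := by
  have h := (hσ.comp Fin.rev_strictAnti).eq_id
  refine Equiv.ext fun i => ?_
  simpa using congrFun h i.rev

lemma Equiv.Perm.eq_revPerm_iff_strictAnti {α : Type*} [Preorder α] {n : ℕ}
    {σ : Equiv.Perm (Fin n)} {z : Fin n → α} (h : ∀ i j, σ i < σ j ↔ z i < z j) :
    σ = Fin.revPerm ↔ StrictAnti z := by
  have : StrictAnti σ ↔ StrictAnti z := forall₂_congr fun i j => imp_congr_right fun _ => h j i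
  rw [← this]
  exact ⟨fun hσ => hσ ▸ Fin.rev_strictAnti, Fin.eq_revPerm_of_strictAnti⟩

lemma measurableSet_setOf_strictAnti {ι α : Type*} [Countable ι] [Preorder ι]
    [TopologicalSpace α] [LinearOrder α] [OrderClosedTopology α] [SecondCountableTopology α]
    [MeasurableSpace α] [OpensMeasurableSpace α] :
    MeasurableSet {x : ι → α | StrictAnti x} := by
  simp only [StrictAnti, ofPred_forall]
  exact .iInter fun i => .iInter fun j => .iInter fun _ =>
    measurableSet_lt (measurable_pi_apply j) (measurable_pi_apply i)

lemma measurableSet_setOf_strictAnti_forall_lt {k : ℕ} (t : ℝ) :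
    MeasurableSet {x : Fin k → ℝ | StrictAnti x ∧ ∀ i, x i < t} := by
  refine measurableSet_setOf_strictAnti.inter ?_
  change MeasurableSet {x : Fin k → ℝ | ∀ i, x i < t}
  rw [ofPred_forall]
  exact .iInter fun i => measurableSet_lt (measurable_pi_apply i) measurable_const

lemma Equiv.Perm.inv_eq_revPerm_iff {n : ℕ} {σ : Equiv.Perm (Fin n)} :
    σ⁻¹ = Fin.revPerm ↔ σ = Fin.revPerm := by
  rw [inv_eq_iff_eq_inv, Equiv.Perm.inv_def, Fin.revPerm_symm]

/-- The law of the maximum of `a + 1` (not `a`) i.i.d. uniform variables on `(0, 1)`. -/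
noncomputable def maxUniformLaw (a : ℕ) : Measure ℝ :=
  (volume.restrict (Ioc 0 1)).withDensity fun x => ENNReal.ofReal ((a + 1) * x ^ a)

lemma setLIntegral_Ioc_ofReal_mul_pow {c : ℝ} (hc : 0 ≤ c) (b : ℕ) {u : ℝ} (hu : 0 ≤ u) :
    ∫⁻ x in Ioc 0 u, ENNReal.ofReal (c * x ^ b) = ENNReal.ofReal (c * u ^ (b + 1) / (b + 1)) := by
  rw [← ofReal_integral_eq_lintegral_ofReal, ← intervalIntegral.integral_of_le hu,
    intervalIntegral.integral_const_mul, integral_pow]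
  · norm_num [mul_div_assoc]
  · exact (intervalIntegral.intervalIntegrable_pow b).1.const_mul c
  · filter_upwards [ae_restrict_mem measurableSet_Ioc] with x hx
    exact mul_nonneg hc (pow_nonneg hx.1.le _)

namespace maxUniformLaw

lemma setLIntegral_eq {a : ℕ} {s : Set ℝ} (hs : MeasurableSet s) {f : ℝ → ℝ≥0∞}
    (hf : Measurable f) :
    ∫⁻ x in s, f x ∂maxUniformLaw a
      = ∫⁻ x in s ∩ Ioc 0 1, ENNReal.ofReal ((a + 1) * x ^ a) * f x := by
  rw [maxUniformLaw, restrict_withDensity hs,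
    lintegral_withDensity_eq_lintegral_mul _ (by fun_prop) hf, Measure.restrict_restrict hs]
  rfl

lemma apply_eq (a : ℕ) {s : Set ℝ} (hs : MeasurableSet s) :
    maxUniformLaw a s = ∫⁻ x in s ∩ Ioc 0 1, ENNReal.ofReal ((a + 1) * x ^ a) := by
  simpa using setLIntegral_eq (a := a) hs measurable_const (f := 1)

lemma setLIntegral_Iio_ofReal_mul_pow (a b : ℕ) {c : ℝ} (hc : 0 ≤ c) {t : ℝ} (ht : t ∈ Icc 0 1) :
    ∫⁻ x in Iio t, ENNReal.ofReal (c * x ^ b) ∂maxUniformLaw a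
      = ENNReal.ofReal ((a + 1) * c * t ^ (b + a + 1) / (b + a + 1)) := by
  have hIoo : Iio t ∩ Ioc 0 1 = Ioo 0 t := by
    ext x; simp only [mem_inter_iff, mem_Iio, mem_Ioc, mem_Ioo]
    constructor
    · rintro ⟨hxt, hx0, -⟩; exact ⟨hx0, hxt⟩
    · rintro ⟨hx0, hxt⟩; exact ⟨hxt, hx0, hxt.le.trans ht.2⟩
  have hmul : ∀ x ∈ Ioc 0 t, ENNReal.ofReal ((a + 1) * x ^ a) * ENNReal.ofReal (c * x ^ b)
      = ENNReal.ofReal ((a + 1) * c * x ^ (b + a)) := fun x hx => by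
    rw [← ENNReal.ofReal_mul (mul_nonneg (by positivity) (pow_nonneg hx.1.le _))]
    ring_nf
  rw [setLIntegral_eq measurableSet_Iio (by fun_prop), hIoo, setLIntegral_congr Ioo_ae_eq_Ioc,
    setLIntegral_congr_fun measurableSet_Ioc hmul,
    setLIntegral_Ioc_ofReal_mul_pow (by positivity) _ ht.1]
  push_cast
  ring_nf

lemma apply_Iic (a : ℕ) {t : ℝ} (ht : t ∈ Icc 0 1) :
    maxUniformLaw a (Iic t) = ENNReal.ofReal (t ^ (a + 1)) := by
  rw [apply_eq a measurableSet_Iic, Iic_inter_Ioc_of_le ht.2,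
    setLIntegral_Ioc_ofReal_mul_pow (by positivity) _ ht.1, mul_div_cancel_left₀ _ (by positivity)]

instance (a : ℕ) : IsProbabilityMeasure (maxUniformLaw a) := by
  refine ⟨?_⟩
  rw [apply_eq a .univ, univ_inter, ← Iic_inter_Ioc_of_le le_rfl, ← apply_eq a measurableSet_Iic,
    apply_Iic a (right_mem_Icc.2 zero_le_one)]
  simp

lemma ae_lt_one (a : ℕ) : ∀ᵐ x ∂maxUniformLaw a, x < 1 := by
  refine ae_iff.2 ?_
  simp only [not_lt]
  change maxUniformLaw a (Ici 1) = 0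
  rw [apply_eq a measurableSet_Ici]
  refine setLIntegral_measure_zero _ _ (measure_mono_null (fun x hx => ?_) (measure_singleton 1))
  exact le_antisymm hx.2.2 hx.1

lemma ae_mem_Ioc (a : ℕ) : ∀ᵐ x ∂maxUniformLaw a, x ∈ Ioc 0 1 :=
  (withDensity_absolutelyContinuous _ _).ae_le (ae_restrict_mem measurableSet_Ioc)

end maxUniformLaw

lemma MeasureTheory.Measure.ext_of_Iic_of_mem_Icc {μ ν : Measure ℝ} [IsProbabilityMeasure μ]
    [IsProbabilityMeasure ν] {a b : ℝ} (hab : a ≤ b) (h : ∀ t ∈ Icc a b, μ (Iic t) = ν (Iic t))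
    (ha : μ (Iic a) = 0) (hb : μ (Iic b) = 1) : μ = ν := by
  have ha' : ν (Iic a) = 0 := h a (left_mem_Icc.2 hab) ▸ ha
  have hb' : ν (Iic b) = 1 := h b (right_mem_Icc.2 hab) ▸ hb
  refine ext_of_Iic μ ν fun t => ?_
  rcases lt_or_ge t a with hta | hat
  · rw [measure_mono_null (Iic_subset_Iic.2 hta.le) ha,
      measure_mono_null (Iic_subset_Iic.2 hta.le) ha']
  rcases le_or_gt t b with htb | hbt
  · exact h t ⟨hat, htb⟩
  · rw [prob_le_one.antisymm (hb ▸ measure_mono (Iic_subset_Iic.2 hbt.le)),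
      prob_le_one.antisymm (hb' ▸ measure_mono (Iic_subset_Iic.2 hbt.le))]

lemma map_eq_maxUniformLaw {Ω : Type*} [MeasurableSpace Ω] {μ : Measure Ω}
    [IsProbabilityMeasure μ] {X : Ω → ℝ} (hX : Measurable X) {a : ℕ}
    (hcdf : ∀ t ∈ Icc (0 : ℝ) 1, μ {ω | X ω ≤ t} = ENNReal.ofReal (t ^ (a + 1))) :
    μ.map X = maxUniformLaw a := by
  have := Measure.isProbabilityMeasure_map (μ := μ) hX.aemeasurable
  have hmap : ∀ t ∈ Icc (0 : ℝ) 1, μ.map X (Iic t) = ENNReal.ofReal (t ^ (a + 1)) :=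
    fun t ht => by
      rw [Measure.map_apply hX measurableSet_Iic]
      exact hcdf t ht
  refine Measure.ext_of_Iic_of_mem_Icc zero_le_one
    (fun t ht => by rw [hmap t ht, maxUniformLaw.apply_Iic a ht]) ?_ ?_
  · simp [hmap 0 (left_mem_Icc.2 zero_le_one)]
  · simp [hmap 1 (right_mem_Icc.2 zero_le_one)]

def chainExp (k s : ℕ) : ℕ := ∑ i ∈ Finset.range k, (s + i + 1)

noncomputable def chainConst (k s : ℕ) : ℝ :=
  2 ^ k * (s + k)! * (k + 2 * s)! / (s ! * k ! * (2 * k + 2 * s)!)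

lemma chainExp_succ (k s : ℕ) : chainExp (k + 1) s = chainExp k (s + 1) + s + 1 := by
  simp only [chainExp, Finset.sum_range_succ']
  grind

lemma two_mul_chainExp (k s : ℕ) : 2 * chainExp k s = k * (k + 2 * s + 1) := by
  induction k generalizing s with
  | zero => simp [chainExp]
  | succ k ih => rw [chainExp_succ, mul_add, mul_add, ih]; ring

lemma chainConst_succ (k s : ℕ) :
    (s + 1) * chainConst k (s + 1) / (chainExp k (s + 1) + s + 1) = chainConst (k + 1) s := by
  have hE : (chainExp k (s + 1) + s + 1 : ℝ) = (k + 1) * (k + 2 * s + 2) / 2 := by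
    have h := two_mul_chainExp (k + 1) s
    rw [chainExp_succ] at h
    have h' : ((2 * (chainExp k (s + 1) + s + 1) : ℕ) : ℝ)
        = ((k + 1) * (k + 1 + 2 * s + 1) : ℕ) := by
      rw [h]
    push_cast at h'
    linarith
  rw [hE, chainConst, chainConst, show s + 1 + k = s + (k + 1) by ring,
    show k + 2 * (s + 1) = (k + 2 * s + 1) + 1 by ring,
    show 2 * k + 2 * (s + 1) = 2 * (k + 1) + 2 * s by ring,
    show k + 1 + 2 * s = k + 2 * s + 1 by ring]
  push_cast [Nat.factorial_succ]
  field_simp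
  ring

lemma chainConst_nonneg (k s : ℕ) : 0 ≤ chainConst k s := by
  unfold chainConst; positivity

lemma chainConst_zero_right (n : ℕ) : chainConst n 0 = 2 ^ n * n ! / (2 * n)! := by
  simp only [chainConst, zero_add, mul_zero, add_zero, Nat.factorial_zero, Nat.cast_one, one_mul]
  field_simp

lemma measure_slice_setOf_strictAnti_lt {k : ℕ} (ν : Measure (Fin k → ℝ)) (t x₀ : ℝ) :
    ν (Prod.mk x₀ ⁻¹' ((MeasurableEquiv.piFinSuccAbove (fun _ : Fin (k + 1) => ℝ) 0).symm ⁻¹'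
        {x | StrictAnti x ∧ ∀ i, x i < t}))
      = (Iio t).indicator (fun u => ν {y | StrictAnti y ∧ ∀ j, y j < u}) x₀ := by
  have hmem : ∀ y, (x₀, y) ∈ (MeasurableEquiv.piFinSuccAbove (fun _ : Fin (k + 1) => ℝ) 0).symm ⁻¹'
      {x | StrictAnti x ∧ ∀ i, x i < t} ↔ x₀ < t ∧ StrictAnti y ∧ ∀ j, y j < x₀ := fun y => by
    simp only [mem_preimage, MeasurableEquiv.piFinSuccAbove_zero_symm_apply]
    exact Fin.strictAnti_cons_and_forall_lt_iff
  by_cases hx₀ : x₀ < t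
  · rw [indicator_of_mem (mem_Iio.2 hx₀)]
    congr 1
    ext y
    exact (hmem y).trans (and_iff_right hx₀)
  · rw [indicator_of_notMem (mt mem_Iio.1 hx₀), ← measure_empty (μ := ν)]
    congr 1
    ext y
    exact iff_of_false (fun h => hx₀ ((hmem y).1 h).1) (notMem_empty y)

lemma pi_maxUniformLaw_strictAnti_lt (k s : ℕ) {t : ℝ} (ht : t ∈ Icc 0 1) :
    Measure.pi (fun i : Fin k => maxUniformLaw (s + i)) {x | StrictAnti x ∧ ∀ i, x i < t}
      = ENNReal.ofReal (chainConst k s * t ^ chainExp k s) := by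
  induction k generalizing s t with
  | zero => simp [chainConst, chainExp, Subsingleton.strictAnti, Nat.factorial_ne_zero]
  | succ k ih =>
    set μ : Fin (k + 1) → Measure ℝ := fun i => maxUniformLaw (s + i)
    set ν := Measure.pi fun j : Fin k => maxUniformLaw (s + 1 + j)
    have hν : Measure.pi (fun j : Fin k => μ (Fin.succAbove 0 j)) = ν := by
      congr 1
      ext1 j
      simp only [μ, Fin.succAbove_zero, Fin.val_succ]
      ring_nf
    have he : MeasurePreserving (MeasurableEquiv.piFinSuccAbove (fun _ : Fin (k + 1) => ℝ) 0).symm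
        ((maxUniformLaw s).prod ν) (Measure.pi μ) := by
      have h := (measurePreserving_piFinSuccAbove μ 0).symm
      rwa [hν, show μ 0 = maxUniformLaw s from rfl] at h
    have hae : ∀ᵐ x₀ ∂maxUniformLaw s, x₀ ∈ Iio t → ν {y | StrictAnti y ∧ ∀ j, y j < x₀}
        = ENNReal.ofReal (chainConst k (s + 1) * x₀ ^ chainExp k (s + 1)) := by
      filter_upwards [maxUniformLaw.ae_mem_Ioc s] with x₀ hx₀ hxt
      exact ih (s + 1) ⟨hx₀.1.le, hxt.le.trans ht.2⟩
    calc Measure.pi μ {x | StrictAnti x ∧ ∀ i, x i < t}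
          = (maxUniformLaw s).prod ν (_ ⁻¹' {x | StrictAnti x ∧ ∀ i, x i < t}) :=
          (he.measure_preimage_equiv _).symm
      _ = ∫⁻ x₀ in Iio t, ν {y | StrictAnti y ∧ ∀ j, y j < x₀} ∂maxUniformLaw s := by
        rw [Measure.prod_apply ((measurableSet_setOf_strictAnti_forall_lt t).preimage
            (MeasurableEquiv.measurable _)),
          ← lintegral_indicator measurableSet_Iio]
        simp_rw [measure_slice_setOf_strictAnti_lt]
      _ = ∫⁻ x₀ in Iio t, ENNReal.ofReal (chainConst k (s + 1) * x₀ ^ chainExp k (s + 1))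
            ∂maxUniformLaw s :=
        setLIntegral_congr_fun_ae measurableSet_Iio hae
      _ = _ := by
        rw [maxUniformLaw.setLIntegral_Iio_ofReal_mul_pow _ _ (chainConst_nonneg _ _) ht,
          ← chainConst_succ, chainExp_succ]
        congr 1
        ring

lemma pi_maxUniformLaw_strictAnti (k s : ℕ) :
    Measure.pi (fun i : Fin k => maxUniformLaw (s + i)) {x | StrictAnti x}
      = ENNReal.ofReal (chainConst k s) := by
  have hlt : ∀ᵐ x ∂Measure.pi (fun i : Fin k => maxUniformLaw (s + i)), ∀ i, x i < 1 :=
    ae_all_iff.2 fun i =>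
      (Measure.tendsto_eval_ae_ae (μ := fun i : Fin k => maxUniformLaw (s + i))).eventually
        (maxUniformLaw.ae_lt_one (s + i))
  have hbounded : {x : Fin k → ℝ | StrictAnti x}
      =ᵐ[Measure.pi fun i : Fin k => maxUniformLaw (s + i)] {x | StrictAnti x ∧ ∀ i, x i < 1} :=
    eventuallyEq_set.2 (hlt.mono fun x hx => (and_iff_left hx).symm)
  rw [measure_congr hbounded,
    pi_maxUniformLaw_strictAnti_lt k s (right_mem_Icc.2 zero_le_one), one_pow, mul_one]

theorem stmt_3_general {n : ℕ} {Ω : Type*} [MeasurableSpace Ω]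
    (μ : Measure Ω) (Z : Fin n → Ω → ℝ) (ρ : Ω → Equiv.Perm (Fin n))
    (h : IsInverseUnfair μ Z ρ) :
    μ {ω | ρ ω = Fin.revPerm}
        = ENNReal.ofReal ((2 : ℝ) ^ n * (Nat.factorial n : ℝ)
            / (Nat.factorial (2 * n) : ℝ)) ∧
    μ {ω | (ρ ω)⁻¹ = Fin.revPerm}
        = ENNReal.ofReal ((2 : ℝ) ^ n * (Nat.factorial n : ℝ)
            / (Nat.factorial (2 * n) : ℝ)) := by
  obtain ⟨hprob, hmeas, hindep, hcdf, -, hrank⟩ := h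
  have hlaw : μ.map (fun ω i => Z i ω) = Measure.pi fun i : Fin n => maxUniformLaw (0 + i) := by
    rw [hindep.map_fun_eq_pi_map fun i => (hmeas i).aemeasurable]
    congr 1
    ext1 i
    rw [zero_add]
    exact map_eq_maxUniformLaw (hmeas i) (hcdf i)
  have hrev : μ {ω | ρ ω = Fin.revPerm}
      = ENNReal.ofReal ((2 : ℝ) ^ n * (Nat.factorial n : ℝ) / (Nat.factorial (2 * n) : ℝ)) := by
    calc μ {ω | ρ ω = Fin.revPerm} = μ ((fun ω i => Z i ω) ⁻¹' {x | StrictAnti x}) :=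
          measure_congr <| eventuallyEq_set.2 <|
            hrank.mono fun ω hω => Equiv.Perm.eq_revPerm_iff_strictAnti hω
      _ = _ := by
        rw [← Measure.map_apply (measurable_pi_lambda _ hmeas) measurableSet_setOf_strictAnti,
          hlaw, pi_maxUniformLaw_strictAnti, chainConst_zero_right]
  simp_rw [Equiv.Perm.inv_eq_revPerm_iff]
  exact ⟨hrev, hrev⟩

/-- The probability that the inverse-unfair permutation `ρ_n` equals the
reversal permutation `w₀(i) = n + 1 - i` is `2^n n! / (2n)!`, and likewise for
the unfair permutation `γ_n = ρ_n⁻¹`. -/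
theorem stmt_3 {n : ℕ} (hn : 1 ≤ n) {Ω : Type*} [MeasurableSpace Ω]
    (μ : Measure Ω) (Z : Fin n → Ω → ℝ) (ρ : Ω → Equiv.Perm (Fin n))
    (h : IsInverseUnfair μ Z ρ) :
    μ {ω | ρ ω = Fin.revPerm}
        = ENNReal.ofReal ((2 : ℝ) ^ n * (Nat.factorial n : ℝ)
            / (Nat.factorial (2 * n) : ℝ)) ∧
    μ {ω | (ρ ω)⁻¹ = Fin.revPerm}
        = ENNReal.ofReal ((2 : ℝ) ^ n * (Nat.factorial n : ℝ)
            / (Nat.factorial (2 * n) : ℝ)) :=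
  stmt_3_general μ Z ρ h
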